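/- Let f(z) = z + a₂z² + a₃z³ + … be a starlike function on the unit disk (f(0)=0, f'(0)=1, f nonvanishing off 0, Re(z f'(z)/f(z)) > 0 off 0). Then for every λ ∈ ℂ, |a₃ − λ a₂²| ≤ max{1, |4λ − 3|}. -/

import Mathlib

/-!
Write `z f'(z) / f(z) = p(z)`, so that `p(0) = 1` and `Re p > 0` on the disc. The Cayley transform
`w = (p - 1) / (p + 1)` is then a Schwarz function and `G = w / z` maps the disc into the closed
disc, so the Schwarz–Pick inequality at the origin gives `‖G'(0)‖ ≤ 1 - ‖G(0)‖²`. Comparing Taylor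
coefficients, `G(0) = a₂ / 2` and `G'(0) = a₃ - 3 a₂² / 4`, hence
`a₃ - λ a₂² = G'(0) + (3 - 4λ) G(0)²`, whose norm is at most `(1 - t) + ‖4λ - 3‖ t` for
`t = ‖G(0)‖² ∈ [0, 1]`.
-/

open Complex ComplexConjugate Metric Set Filter Topology

section IteratedDeriv

variable {𝕜 : Type*} [NontriviallyNormedField 𝕜] {E : Type*} [NormedAddCommGroup E]
  [NormedSpace 𝕜 E] {u : 𝕜 → E} {c : 𝕜}

theorem AnalyticAt.dslope_self (hu : AnalyticAt 𝕜 u c) : AnalyticAt 𝕜 (dslope u c) c := by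
  obtain ⟨P, hP⟩ := hu
  exact ⟨_, hP.has_fpower_series_dslope_fslope⟩

variable [CompleteSpace E]

theorem HasFPowerSeriesAt.iteratedDeriv_eq_factorial_smul_coeff
    {P : FormalMultilinearSeries 𝕜 𝕜 E} (h : HasFPowerSeriesAt u P c) (n : ℕ) :
    iteratedDeriv n u c = n.factorial • P.coeff n := by
  obtain ⟨r, hr⟩ := h
  rw [iteratedDeriv, ← hr.factorial_smul 1 n, FormalMultilinearSeries.coeff]
  rfl

theorem AnalyticAt.succ_smul_iteratedDeriv_dslope (hu : AnalyticAt 𝕜 u c) (n : ℕ) :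
    (n + 1) • iteratedDeriv n (dslope u c) c = iteratedDeriv (n + 1) u c := by
  obtain ⟨P, hP⟩ := hu
  rw [hP.iteratedDeriv_eq_factorial_smul_coeff,
    hP.has_fpower_series_dslope_fslope.iteratedDeriv_eq_factorial_smul_coeff,
    FormalMultilinearSeries.coeff_fslope, smul_smul, Nat.factorial_succ]

end IteratedDeriv

section SchwarzPick

theorem one_sub_conj_mul_ne_zero {c z : ℂ} (hc : ‖c‖ < 1) (hz : ‖z‖ ≤ 1) :
    1 - conj c * z ≠ 0 := by
  refine sub_ne_zero.mpr fun h => ?_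
  have : ‖conj c * z‖ < 1 := by
    rw [norm_mul, Complex.norm_conj]
    nlinarith [norm_nonneg c, norm_nonneg z]
  simp [← h] at this

theorem norm_sub_div_one_sub_conj_mul_le_one {c z : ℂ} (hc : ‖c‖ < 1) (hz : ‖z‖ ≤ 1) :
    ‖(z - c) / (1 - conj c * z)‖ ≤ 1 := by
  have hpick : ‖1 - conj c * z‖ ^ 2 - ‖z - c‖ ^ 2 = (1 - ‖c‖ ^ 2) * (1 - ‖z‖ ^ 2) := by
    simp only [Complex.sq_norm, Complex.normSq_apply, Complex.sub_re, Complex.sub_im,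
      Complex.mul_re, Complex.mul_im, Complex.one_re, Complex.one_im, Complex.conj_re,
      Complex.conj_im]
    ring
  have hden : 0 < ‖1 - conj c * z‖ := norm_pos_iff.mpr (one_sub_conj_mul_ne_zero hc hz)
  rw [norm_div, div_le_one hden, ← sq_le_sq₀ (norm_nonneg _) hden.le]
  have : 0 ≤ (1 - ‖c‖ ^ 2) * (1 - ‖z‖ ^ 2) :=
    mul_nonneg (by nlinarith [norm_nonneg c]) (by nlinarith [norm_nonneg z])
  linarith

theorem hasDerivAt_sub_div_one_sub_conj_mul_self {c : ℂ} (hc : ‖c‖ < 1) :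
    HasDerivAt (fun z => (z - c) / (1 - conj c * z)) ((1 - ‖c‖ ^ 2 : ℝ) : ℂ)⁻¹ c := by
  have hne := one_sub_conj_mul_ne_zero hc hc.le
  refine (((hasDerivAt_id c).sub_const c).div
    (((hasDerivAt_id c).const_mul (conj c)).const_sub 1) hne).congr_deriv ?_
  rw [Complex.conj_mul'] at hne
  simp only [id, Complex.conj_mul', sub_self, zero_mul, sub_zero, one_mul]
  push_cast
  field_simp

theorem norm_deriv_le_one_sub_sq_of_mapsTo_ball {G : ℂ → ℂ}
    (hd : DifferentiableOn ℂ G (ball 0 1)) (h_maps : MapsTo G (ball 0 1) (closedBall 0 1)) :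
    ‖deriv G 0‖ ≤ 1 - ‖G 0‖ ^ 2 := by
  have h0 : (0 : ℂ) ∈ ball (0 : ℂ) 1 := mem_ball_self one_pos
  have hG0 : ‖G 0‖ ≤ 1 := by simpa using h_maps h0
  rcases hG0.lt_or_eq with hlt | heq
  · set c := G 0
    have hden : ∀ z ∈ ball (0 : ℂ) 1, 1 - conj c * G z ≠ 0 := fun z hz =>
      one_sub_conj_mul_ne_zero hlt (by simpa using h_maps hz)
    set H := fun z => (G z - c) / (1 - conj c * G z)
    have hHd : DifferentiableOn ℂ H (ball 0 1) :=
      (hd.sub_const c).div ((differentiableOn_const 1).sub (hd.const_mul _)) hden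
    have hH_maps : MapsTo H (ball 0 1) (closedBall (H 0) 1) := by
      intro z hz
      simp only [H, c, sub_self, zero_div, mem_closedBall_zero_iff]
      exact norm_sub_div_one_sub_conj_mul_le_one hlt (by simpa using h_maps hz)
    have hH_deriv : deriv H 0 = ((1 - ‖c‖ ^ 2 : ℝ) : ℂ)⁻¹ * deriv G 0 :=
      ((hasDerivAt_sub_div_one_sub_conj_mul_self hlt).comp 0
        (hd.differentiableAt (isOpen_ball.mem_nhds h0)).hasDerivAt).deriv
    have hpos : 0 < 1 - ‖c‖ ^ 2 := by nlinarith [norm_nonneg c]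
    have hH_schwarz := norm_deriv_le_one_of_mapsTo_ball hHd hH_maps one_pos
    rwa [hH_deriv, norm_mul, norm_inv, Complex.norm_real, Real.norm_of_nonneg hpos.le,
      inv_mul_le_one₀ hpos] at hH_schwarz
  · have hmax : IsLocalMax (norm ∘ G) 0 :=
      eventually_of_mem (isOpen_ball.mem_nhds h0) fun z hz => by
        simpa [heq] using h_maps hz
    have hconst : G =ᶠ[𝓝 0] fun _ => G 0 := Complex.eventually_eq_of_isLocalMax_norm
      (hd.eventually_differentiableAt (isOpen_ball.mem_nhds h0)) hmax
    rw [hconst.deriv_eq, deriv_const, heq]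
    norm_num

end SchwarzPick

theorem norm_sub_one_div_add_one_lt_one {p : ℂ} (hp : 0 < p.re) : ‖(p - 1) / (p + 1)‖ < 1 := by
  have hlt : ‖p - 1‖ < ‖p + 1‖ := by
    rw [← sq_lt_sq₀ (norm_nonneg _) (norm_nonneg _), Complex.sq_norm, Complex.sq_norm,
      Complex.normSq_apply, Complex.normSq_apply]
    simp only [Complex.sub_re, Complex.sub_im, Complex.add_re, Complex.add_im, Complex.one_re,
      Complex.one_im]
    nlinarith
  rw [norm_div, div_lt_one ((norm_nonneg _).trans_lt hlt)]
  exact hlt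

theorem iteratedDeriv_eq_of_mul_one_add_eq {w p : ℂ → ℂ} (hw : AnalyticAt ℂ w 0)
    (hp : AnalyticAt ℂ p 0) (hp0 : p 0 = 1)
    (h : (w * fun z => 1 + p z) =ᶠ[𝓝 0] fun z => -1 + p z) :
    deriv w 0 = deriv p 0 / 2 ∧
      iteratedDeriv 2 w 0 = (iteratedDeriv 2 p 0 - deriv p 0 ^ 2) / 2 := by
  have hq : AnalyticAt ℂ (fun z => 1 + p z) 0 := analyticAt_const.add hp
  have e0 := h.iteratedDeriv_eq 0
  have e1 := h.iteratedDeriv_eq 1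
  have e2 := h.iteratedDeriv_eq 2
  rw [iteratedDeriv_mul hw.contDiffAt hq.contDiffAt] at e0 e1 e2
  simp only [Finset.sum_range_succ, Finset.range_one, Finset.sum_singleton, Nat.choose_self,
    Nat.choose_zero_right, Nat.choose_succ_self_right, Nat.cast_one, Nat.cast_ofNat,
    iteratedDeriv_zero, iteratedDeriv_one, iteratedDeriv_const_add one_pos,
    iteratedDeriv_const_add two_pos, hp0, Nat.reduceAdd, Nat.add_one_sub_one, tsub_zero,
    tsub_self, zero_add, one_mul] at e0 e1 e2
  have hw0 : w 0 = 0 := by linear_combination e0 / 2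
  have hw1 : deriv w 0 = deriv p 0 / 2 := by linear_combination (e1 - deriv p 0 * hw0) / 2
  exact ⟨hw1, by linear_combination e2 / 2 - iteratedDeriv 2 p 0 / 2 * hw0 - deriv p 0 * hw1⟩

theorem norm_iteratedDeriv_two_sub_sq_le_of_re_pos {p : ℂ → ℂ}
    (hp : AnalyticOnNhd ℂ p (ball 0 1)) (hre : ∀ z ∈ ball (0 : ℂ) 1, 0 < (p z).re)
    (hp0 : p 0 = 1) :
    ‖(iteratedDeriv 2 p 0 - deriv p 0 ^ 2) / 4‖ ≤ 1 - ‖deriv p 0 / 2‖ ^ 2 := by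
  have h0 : (0 : ℂ) ∈ ball (0 : ℂ) 1 := mem_ball_self one_pos
  have hden : ∀ z ∈ ball (0 : ℂ) 1, 1 + p z ≠ 0 := fun z hz h => by
    have := congrArg Complex.re h
    simp only [Complex.add_re, Complex.one_re, Complex.zero_re] at this
    linarith [hre z hz]
  set w : ℂ → ℂ := fun z => (p z - 1) / (1 + p z)
  have hw : AnalyticOnNhd ℂ w (ball 0 1) := fun z hz =>
    ((hp z hz).sub analyticAt_const).div (analyticAt_const.add (hp z hz)) (hden z hz)
  have hw0 : w 0 = 0 := by simp [w, hp0]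
  have hw_maps : MapsTo w (ball 0 1) (closedBall (w 0) 1) := fun z hz => by
    rw [hw0, mem_closedBall_zero_iff]
    simp only [w, add_comm (1 : ℂ)]
    exact (norm_sub_one_div_add_one_lt_one (hre z hz)).le
  have hG : DifferentiableOn ℂ (dslope w 0) (ball 0 1) :=
    (differentiableOn_dslope (isOpen_ball.mem_nhds h0)).mpr hw.differentiableOn
  have hG_maps : MapsTo (dslope w 0) (ball 0 1) (closedBall 0 1) := fun z hz => by
    simpa using norm_dslope_le_div_of_mapsTo_ball hw.differentiableOn hw_maps hz
  have hw_mul : (w * fun z => 1 + p z) =ᶠ[𝓝 0] fun z => -1 + p z :=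
    eventuallyEq_of_mem (isOpen_ball.mem_nhds h0) fun z hz => by
      simp only [Pi.mul_apply, w]
      field_simp [hden z hz]
      ring
  obtain ⟨hw1, hw2⟩ := iteratedDeriv_eq_of_mul_one_add_eq (hw 0 h0) (hp 0 h0) hp0 hw_mul
  have hG1 : deriv (dslope w 0) 0 = (iteratedDeriv 2 p 0 - deriv p 0 ^ 2) / 4 := by
    have h := (hw 0 h0).succ_smul_iteratedDeriv_dslope 1
    simp only [iteratedDeriv_one, Nat.reduceAdd, nsmul_eq_mul, Nat.cast_ofNat] at h
    linear_combination h / 2 + hw2 / 2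
  simpa [hw1, hG1] using norm_deriv_le_one_sub_sq_of_mapsTo_ball hG hG_maps

theorem iteratedDeriv_eq_of_deriv_eq_mul_dslope {f p : ℂ → ℂ} (hf : AnalyticAt ℂ f 0)
    (hp : AnalyticAt ℂ p 0) (h1 : deriv f 0 = 1) (h : deriv f =ᶠ[𝓝 0] p * dslope f 0)
    (a : ℕ → ℂ) (ha : ∀ n, a n = iteratedDeriv n f 0 / n.factorial) :
    p 0 = 1 ∧ deriv p 0 = a 2 ∧ iteratedDeriv 2 p 0 = 4 * a 3 - 2 * a 2 ^ 2 := by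
  have hg1 := hf.succ_smul_iteratedDeriv_dslope 1
  have hg2 := hf.succ_smul_iteratedDeriv_dslope 2
  have e0 := h.iteratedDeriv_eq 0
  have e1 := h.iteratedDeriv_eq 1
  have e2 := h.iteratedDeriv_eq 2
  rw [iteratedDeriv_mul hp.contDiffAt hf.dslope_self.contDiffAt] at e0 e1 e2
  simp only [← iteratedDeriv_succ', Finset.sum_range_succ, Finset.range_one,
    Finset.sum_singleton, Nat.choose_self, Nat.choose_zero_right, Nat.choose_succ_self_right,
    Nat.cast_one, Nat.cast_ofNat, iteratedDeriv_zero, iteratedDeriv_one, dslope_same, h1,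
    Nat.reduceAdd, Nat.add_one_sub_one, tsub_zero, tsub_self, zero_tsub, zero_add, mul_one,
    one_mul, nsmul_eq_mul] at e0 e1 e2 hg1 hg2
  rw [← e0, one_mul] at e1 e2
  have hp1 : deriv p 0 = iteratedDeriv 2 f 0 / 2 := by linear_combination -e1 - hg1 / 2
  refine ⟨e0.symm, ?_, ?_⟩ <;> simp only [ha, Nat.factorial] <;> push_cast
  · exact hp1
  · linear_combination -e2 - hg2 / 3 - iteratedDeriv 2 f 0 * hp1 - deriv p 0 * hg1

theorem exists_caratheodory_of_starlike {f : ℂ → ℂ} (hf : DifferentiableOn ℂ f (ball 0 1))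
    (h0 : f 0 = 0) (h1 : deriv f 0 = 1) (hnz : ∀ z ∈ ball (0 : ℂ) 1, z ≠ 0 → f z ≠ 0)
    (hre : ∀ z ∈ ball (0 : ℂ) 1, z ≠ 0 → 0 < (z * deriv f z / f z).re)
    (a : ℕ → ℂ) (ha : ∀ n, a n = iteratedDeriv n f 0 / n.factorial) :
    ∃ p : ℂ → ℂ, AnalyticOnNhd ℂ p (ball 0 1) ∧ (∀ z ∈ ball (0 : ℂ) 1, 0 < (p z).re) ∧
      p 0 = 1 ∧ deriv p 0 = a 2 ∧ iteratedDeriv 2 p 0 = 4 * a 3 - 2 * a 2 ^ 2 := by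
  have h0_mem : (0 : ℂ) ∈ ball (0 : ℂ) 1 := mem_ball_self one_pos
  have hfA : AnalyticOnNhd ℂ f (ball 0 1) := hf.analyticOnNhd isOpen_ball
  have hgA : AnalyticOnNhd ℂ (dslope f 0) (ball 0 1) :=
    ((differentiableOn_dslope (isOpen_ball.mem_nhds h0_mem)).mpr hf).analyticOnNhd isOpen_ball
  have hg_eq : ∀ z ≠ 0, dslope f 0 z = f z / z := fun z hz => by
    rw [dslope_of_ne _ hz, slope_def_field, h0, sub_zero, sub_zero]
  have hg_ne : ∀ z ∈ ball (0 : ℂ) 1, dslope f 0 z ≠ 0 := by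
    intro z hz
    rcases eq_or_ne z 0 with rfl | hz0
    · simp [h1]
    · rw [hg_eq z hz0]
      exact div_ne_zero (hnz z hz hz0) hz0
  -- `z f'(z) / f(z)` with its removable singularity at `0` filled in
  set p : ℂ → ℂ := fun z => deriv f z / dslope f 0 z
  have hpA : AnalyticOnNhd ℂ p (ball 0 1) := fun z hz =>
    (hfA.deriv z hz).div (hgA z hz) (hg_ne z hz)
  have hfp : deriv f =ᶠ[𝓝 0] p * dslope f 0 :=
    eventuallyEq_of_mem (isOpen_ball.mem_nhds h0_mem) fun z hz =>
      (div_mul_cancel₀ _ (hg_ne z hz)).symm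
  obtain ⟨hp0, hp1, hp2⟩ :=
    iteratedDeriv_eq_of_deriv_eq_mul_dslope (hfA 0 h0_mem) (hpA 0 h0_mem) h1 hfp a ha
  refine ⟨p, hpA, fun z hz => ?_, hp0, hp1, hp2⟩
  rcases eq_or_ne z 0 with rfl | hz0
  · simp [hp0]
  · convert hre z hz hz0 using 2
    simp only [p, hg_eq z hz0]
    field_simp

theorem norm_add_mul_sq_le_max {d c μ : ℂ} (h : ‖d‖ ≤ 1 - ‖c‖ ^ 2) :
    ‖d + μ * c ^ 2‖ ≤ max 1 ‖μ‖ := by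
  have hc : 0 ≤ 1 - ‖c‖ ^ 2 := (norm_nonneg d).trans h
  calc ‖d + μ * c ^ 2‖ ≤ (1 - ‖c‖ ^ 2) * 1 + ‖c‖ ^ 2 * ‖μ‖ := by
        grw [norm_add_le, norm_mul, norm_pow, h]
        linarith
    _ ≤ (1 - ‖c‖ ^ 2) * max 1 ‖μ‖ + ‖c‖ ^ 2 * max 1 ‖μ‖ := by gcongr <;> simp
    _ = max 1 ‖μ‖ := by ring

theorem stmt7 (f : ℂ → ℂ)
    (hf : DifferentiableOn ℂ f (ball (0:ℂ) 1))
    (h0 : f 0 = 0) (h1 : deriv f 0 = 1)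
    (hnz : ∀ z ∈ ball (0:ℂ) 1, z ≠ 0 → f z ≠ 0)
    (hre : ∀ z ∈ ball (0:ℂ) 1, z ≠ 0 → 0 < (z * deriv f z / f z).re)
    (a : ℕ → ℂ) (ha : ∀ n, a n = iteratedDeriv n f 0 / n.factorial) :
    ∀ lam : ℂ, ‖a 3 - lam * a 2 ^ 2‖ ≤ max 1 ‖4 * lam - 3‖ := by
  intro lam
  obtain ⟨p, hp, hp_re, hp0, hp1, hp2⟩ := exists_caratheodory_of_starlike hf h0 h1 hnz hre a ha
  have hcoeff : a 3 - lam * a 2 ^ 2 =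
      (iteratedDeriv 2 p 0 - deriv p 0 ^ 2) / 4 + (3 - 4 * lam) * (deriv p 0 / 2) ^ 2 := by
    rw [hp1, hp2]
    ring
  rw [hcoeff, ← norm_neg (4 * lam - 3), neg_sub]
  exact norm_add_mul_sq_le_max (norm_iteratedDeriv_two_sub_sq_le_of_re_pos hp hp_re hp0)
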